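/- For all x ∈ [0,1): ω₂(x) = −1 − β(x)·x + (5/2)(1 − t₁(x)); ω₃(x) = −1 + β(x)·x² − 5(1 − t₁(x))·x + (43/18)(1 − t₂(x)); and ω₄(x) = −1 − (2/3)β(x)·x³ + 5(1 − t₁(x))·x² − (43/9)(1 − t₂(x))·x + (701/294)(1 − t₃(x)) + β(x)·(S(x)/48 − 1/42), where S(x) := Σ_{a=0}^∞ wal_{2^a}(x) · 2^{−3a}. -/

import Mathlib

noncomputable def binDigit (ℓ : ℕ) (x : ℝ) : ℕ := (⌊(2 : ℝ) ^ ℓ * x⌋).toNat % 2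

noncomputable def walsh (k : ℕ) (x : ℝ) : ℝ :=
  (-1 : ℝ) ^ (∑ ℓ ∈ Finset.range (k + 1), (k / 2 ^ ℓ % 2) * binDigit (ℓ + 1) x)

def dickWeight (α k : ℕ) : ℕ :=
  (((((Finset.range (k + 1)).filter fun i => k / 2 ^ i % 2 = 1).sort (· ≤ ·)).reverse.take
        α).map (· + 1)).sum

noncomputable def omegaDick (α : ℕ) (x : ℝ) : ℝ :=
  ∑' k : ℕ, (2 : ℝ) ^ (-(dickWeight α (k + 1) : ℤ)) * walsh (k + 1) x

noncomputable def betaFn (x : ℝ) : ℤ := if x = 0 then 0 else -⌊Real.logb 2 x⌋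

noncomputable def tFn (ν : ℕ) (x : ℝ) : ℝ :=
  if x = 0 then 0 else (2 : ℝ) ^ (-(ν : ℤ) * betaFn x)

noncomputable def Sser (x : ℝ) : ℝ := ∑' a : ℕ, walsh (2 ^ a) x * (2 : ℝ) ^ (-(3 * (a : ℤ)))

/-!
Let `S_α(m) = ∑_{k < 2^m} 2^{-μ_α(k)} wal_k(x)`. Writing `k < 2^{m+1}` as `k` or `2^m + k` with
`k < 2^m`, the new top bit adds `m + 1` to the Dick weight and a factor
`wal_{2^m}(x) = 1 - 2 x_{m+1}` to the Walsh function, so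
`S_{α+1}(m+1) = S_{α+1}(m) + 2^{-(m+1)} wal_{2^m}(x) S_α(m)`.

For `m < β(x)` all digits seen are `0` and `S_α(m)` is its value at `x = 0`, an explicit polynomial
in `m` and `2^{-m}`. From `m = β(x)` on, `S_0(m) = 0`, `S_1(m) = β/2`, and `S_2, S_3, S_4` are
polynomials in the truncation `⌊2^m x⌋ 2^{-m}`, in `2^{-m}` and in the partial sums of `S(x)`: they
are the means of `1 + ω_α` over the dyadic interval of length `2^{-m}` containing `x`. Letting
`m → ∞` gives the formulas; absolute convergence follows from the case `x = 0`, where all terms are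
positive.
-/

open Finset Filter Topology

theorem Nat.bitIndices_two_pow_add {m k : ℕ} (hk : k < 2 ^ m) :
    (2 ^ m + k).bitIndices = k.bitIndices ++ [m] := by
  have hlt : ∀ i ∈ k.bitIndices, i < m := fun i hi =>
    (Nat.pow_lt_pow_iff_right (by norm_num)).1 ((Nat.two_pow_le_of_mem_bitIndices hi).trans_lt hk)
  have hsorted : (k.bitIndices ++ [m]).SortedLT := by
    rw [List.sortedLT_iff_pairwise, List.pairwise_append]
    exact ⟨Nat.bitIndices_sorted.pairwise, List.pairwise_singleton _ _,
      fun i hi j hj => (List.mem_singleton.1 hj) ▸ hlt i hi⟩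
  conv_lhs => rw [← Nat.sum_map_two_pow_bitIndices k]
  rw [← Nat.bitIndices_sum_map_two_pow hsorted]
  simp [add_comm]

theorem filter_bit_eq_toFinset_bitIndices (k : ℕ) :
    (range (k + 1)).filter (fun i => k / 2 ^ i % 2 = 1) = k.bitIndices.toFinset := by
  ext i
  simp only [mem_filter, mem_range, List.mem_toFinset, Nat.mem_bitIndices,
    Nat.testBit_eq_decide_div_mod_eq, decide_eq_true_eq, and_iff_right_iff_imp]
  intro hi
  have := Nat.ge_two_pow_of_testBit (Nat.testBit_eq_decide_div_mod_eq ▸ decide_eq_true hi)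
  have := i.lt_two_pow_self
  omega

theorem dickWeight_eq (α k : ℕ) :
    dickWeight α k = ((k.bitIndices.reverse.take α).map (· + 1)).sum := by
  rw [dickWeight, filter_bit_eq_toFinset_bitIndices,
    (List.toFinset_sort _ Nat.bitIndices_nodup).2 (Nat.bitIndices_sorted.pairwise.imp le_of_lt)]

@[simp] theorem dickWeight_zero_left (k : ℕ) : dickWeight 0 k = 0 := by
  simp [dickWeight_eq]

@[simp] theorem dickWeight_zero_right (α : ℕ) : dickWeight α 0 = 0 := by
  simp [dickWeight_eq]

theorem dickWeight_succ_two_pow_add (α : ℕ) {m k : ℕ} (hk : k < 2 ^ m) :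
    dickWeight (α + 1) (2 ^ m + k) = m + 1 + dickWeight α k := by
  simp [dickWeight_eq, Nat.bitIndices_two_pow_add hk]

theorem walsh_eq_neg_one_pow (k : ℕ) (x : ℝ) :
    walsh k x = (-1) ^ (k.bitIndices.map fun i => binDigit (i + 1) x).sum := by
  have hbit : ∀ i, k / 2 ^ i % 2 * binDigit (i + 1) x =
      if k / 2 ^ i % 2 = 1 then binDigit (i + 1) x else 0 := fun i => by
    rcases Nat.mod_two_eq_zero_or_one (k / 2 ^ i) with h | h <;> simp [h]
  rw [walsh, sum_congr rfl fun i _ => hbit i, ← sum_filter, filter_bit_eq_toFinset_bitIndices,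
    List.sum_toFinset _ Nat.bitIndices_nodup]

@[simp] theorem walsh_zero_left (x : ℝ) : walsh 0 x = 1 := by
  simp [walsh_eq_neg_one_pow]

theorem walsh_two_pow_add {m k : ℕ} (hk : k < 2 ^ m) (x : ℝ) :
    walsh (2 ^ m + k) x = walsh (2 ^ m) x * walsh k x := by
  simp [walsh_eq_neg_one_pow, Nat.bitIndices_two_pow_add hk, pow_add, mul_comm]

theorem walsh_two_pow (m : ℕ) (x : ℝ) : walsh (2 ^ m) x = (-1) ^ binDigit (m + 1) x := by
  simp [walsh_eq_neg_one_pow]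

theorem abs_walsh (k : ℕ) (x : ℝ) : |walsh k x| = 1 := by
  simp [walsh_eq_neg_one_pow]

section BinaryDigits

variable {x : ℝ}

theorem binDigit_eq_zero_or_one (ℓ : ℕ) (x : ℝ) : binDigit ℓ x = 0 ∨ binDigit ℓ x = 1 :=
  Nat.mod_two_eq_zero_or_one _

theorem walsh_two_pow_eq (m : ℕ) (x : ℝ) :
    walsh (2 ^ m) x = 1 - 2 * (binDigit (m + 1) x : ℝ) := by
  rcases binDigit_eq_zero_or_one (m + 1) x with h | h <;> norm_num [walsh_two_pow, h]

theorem floor_two_pow_mul_nonneg (hx : 0 ≤ x) (m : ℕ) : 0 ≤ ⌊(2 : ℝ) ^ m * x⌋ :=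
  Int.floor_nonneg.2 (by positivity)

theorem floor_two_pow_mul_mono (hx : 0 ≤ x) {j m : ℕ} (h : j ≤ m) :
    ⌊(2 : ℝ) ^ j * x⌋ ≤ ⌊(2 : ℝ) ^ m * x⌋ :=
  Int.floor_mono (mul_le_mul_of_nonneg_right (pow_le_pow_right₀ one_le_two h) hx)

theorem floor_two_pow_succ_mul (hx : 0 ≤ x) (m : ℕ) :
    ⌊(2 : ℝ) ^ (m + 1) * x⌋ = 2 * ⌊(2 : ℝ) ^ m * x⌋ + binDigit (m + 1) x := by
  set y := (2 : ℝ) ^ m * x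
  have hy : (2 : ℝ) ^ (m + 1) * x = 2 * y := by rw [pow_succ]; ring
  have hlo : 2 * ⌊y⌋ ≤ ⌊(2 : ℝ) ^ (m + 1) * x⌋ := by
    rw [Int.le_floor, hy]; push_cast; linarith [Int.floor_le y]
  have hhi : ⌊(2 : ℝ) ^ (m + 1) * x⌋ < 2 * ⌊y⌋ + 2 := by
    rw [Int.floor_lt, hy]; push_cast; linarith [Int.lt_floor_add_one y]
  have hdigit : (binDigit (m + 1) x : ℤ) = ⌊(2 : ℝ) ^ (m + 1) * x⌋ % 2 := by
    rw [binDigit, Int.natCast_mod, Int.toNat_of_nonneg (floor_two_pow_mul_nonneg hx _)]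
    rfl
  omega

theorem walsh_eq_one_of_floor_eq_zero (hx : 0 ≤ x) {k m : ℕ} (hk : k < 2 ^ m)
    (h : ⌊(2 : ℝ) ^ m * x⌋ = 0) : walsh k x = 1 := by
  suffices ∀ i ∈ k.bitIndices, binDigit (i + 1) x = 0 by
    simp [walsh_eq_neg_one_pow, List.map_congr_left this]
  intro i hi
  have him : i + 1 ≤ m :=
    (Nat.pow_lt_pow_iff_right (by norm_num)).1 ((Nat.two_pow_le_of_mem_bitIndices hi).trans_lt hk)
  have hfloor : ⌊(2 : ℝ) ^ (i + 1) * x⌋ = 0 :=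
    le_antisymm (h ▸ floor_two_pow_mul_mono hx him) (floor_two_pow_mul_nonneg hx _)
  simp [binDigit, hfloor]

end BinaryDigits

noncomputable def dickBlockSum (α : ℕ) (x : ℝ) (m : ℕ) : ℝ :=
  ∑ k ∈ range (2 ^ m), (2 : ℝ) ^ (-(dickWeight α k : ℤ)) * walsh k x

noncomputable def dickWeightSum (α m : ℕ) : ℝ :=
  ∑ k ∈ range (2 ^ m), (2 : ℝ) ^ (-(dickWeight α k : ℤ))

theorem sum_range_two_pow_succ {M : Type*} [AddCommMonoid M] (f : ℕ → M) (m : ℕ) :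
    ∑ k ∈ range (2 ^ (m + 1)), f k =
      ∑ k ∈ range (2 ^ m), f k + ∑ k ∈ range (2 ^ m), f (2 ^ m + k) := by
  rw [pow_succ, mul_two, sum_range_add]

theorem two_zpow_neg_natCast (n : ℕ) : (2 : ℝ) ^ (-(n : ℤ)) = (2⁻¹ : ℝ) ^ n := by
  rw [zpow_neg, zpow_natCast, inv_pow]

theorem dickBlockSum_succ_succ (α : ℕ) (x : ℝ) (m : ℕ) :
    dickBlockSum (α + 1) x (m + 1) =
      dickBlockSum (α + 1) x m + (2⁻¹ : ℝ) ^ (m + 1) * walsh (2 ^ m) x * dickBlockSum α x m := by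
  rw [dickBlockSum, sum_range_two_pow_succ, dickBlockSum, dickBlockSum, mul_sum]
  congr 1
  refine sum_congr rfl fun k hk => ?_
  have hk : k < 2 ^ m := mem_range.1 hk
  rw [dickWeight_succ_two_pow_add α hk, walsh_two_pow_add hk, ← two_zpow_neg_natCast (m + 1)]
  push_cast
  rw [neg_add, zpow_add₀ two_ne_zero]
  ring

theorem dickBlockSum_zero_succ (x : ℝ) (m : ℕ) :
    dickBlockSum 0 x (m + 1) = (1 + walsh (2 ^ m) x) * dickBlockSum 0 x m := by
  simp only [dickBlockSum, sum_range_two_pow_succ, dickWeight_zero_left, CharP.cast_eq_zero,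
    neg_zero, zpow_zero, one_mul, add_mul, mul_sum, sum_add_distrib]
  congr 1
  exact sum_congr rfl fun k hk => walsh_two_pow_add (mem_range.1 hk) x

theorem dickBlockSum_eq_dickWeightSum (α : ℕ) {x : ℝ} (hx : 0 ≤ x) {m : ℕ}
    (h : ⌊(2 : ℝ) ^ m * x⌋ = 0) : dickBlockSum α x m = dickWeightSum α m :=
  sum_congr rfl fun k hk => by rw [walsh_eq_one_of_floor_eq_zero hx (mem_range.1 hk) h, mul_one]

theorem dickBlockSum_at_zero (α : ℕ) : dickBlockSum α 0 = dickWeightSum α :=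
  funext fun _ => dickBlockSum_eq_dickWeightSum α le_rfl (by simp)

theorem dickWeightSum_succ_succ (α m : ℕ) :
    dickWeightSum (α + 1) (m + 1) =
      dickWeightSum (α + 1) m + (2⁻¹ : ℝ) ^ (m + 1) * dickWeightSum α m := by
  have hw : walsh (2 ^ m) (0 : ℝ) = 1 :=
    walsh_eq_one_of_floor_eq_zero le_rfl (Nat.pow_lt_pow_right one_lt_two m.lt_succ_self)
      (by simp)
  simpa [dickBlockSum_at_zero, hw] using dickBlockSum_succ_succ α 0 m

@[simp] theorem dickWeightSum_zero_right (α : ℕ) : dickWeightSum α 0 = 1 := by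
  simp [dickWeightSum]

theorem dickWeightSum_zero_left (m : ℕ) : dickWeightSum 0 m = 2 ^ m := by
  simp [dickWeightSum]

theorem dickWeightSum_one (m : ℕ) : dickWeightSum 1 m = 1 + m / 2 := by
  induction m with
  | zero => simp
  | succ m ih =>
    have h : (2⁻¹ : ℝ) ^ m * 2 ^ m = 1 := by rw [← mul_pow]; norm_num
    rw [dickWeightSum_succ_succ, ih, dickWeightSum_zero_left]
    push_cast
    linear_combination h / 2

theorem dickWeightSum_two (m : ℕ) :
    dickWeightSum 2 m = 5 / 2 - (3 / 2 + m / 2) * (2⁻¹ : ℝ) ^ m := by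
  induction m with
  | zero => norm_num
  | succ m ih =>
    rw [dickWeightSum_succ_succ, ih, dickWeightSum_one]
    push_cast
    ring

theorem dickWeightSum_three (m : ℕ) :
    dickWeightSum 3 m =
      43 / 18 - 5 / 2 * (2⁻¹ : ℝ) ^ m + (10 / 9 + m / 3) * ((2⁻¹ : ℝ) ^ m) ^ 2 := by
  induction m with
  | zero => norm_num
  | succ m ih =>
    rw [dickWeightSum_succ_succ, ih, dickWeightSum_two]
    push_cast
    ring

theorem dickWeightSum_four (m : ℕ) :
    dickWeightSum 4 m = 701 / 294 - 43 / 18 * (2⁻¹ : ℝ) ^ m + 5 / 3 * ((2⁻¹ : ℝ) ^ m) ^ 2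
      - (292 / 441 + 4 * m / 21) * ((2⁻¹ : ℝ) ^ m) ^ 3 := by
  induction m with
  | zero => norm_num
  | succ m ih =>
    rw [dickWeightSum_succ_succ, ih, dickWeightSum_three]
    push_cast
    ring

theorem tendsto_inv_two_pow : Tendsto (fun m : ℕ => (2⁻¹ : ℝ) ^ m) atTop (𝓝 0) :=
  tendsto_pow_atTop_nhds_zero_of_lt_one (by norm_num) (by norm_num)

theorem tendsto_natCast_mul_inv_two_pow :
    Tendsto (fun m : ℕ => m * (2⁻¹ : ℝ) ^ m) atTop (𝓝 0) := by
  simpa using (summable_pow_mul_geometric_of_norm_lt_one 1 (r := (2⁻¹ : ℝ))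
    (by norm_num)).tendsto_atTop_zero

theorem tendsto_dickWeightSum_two : Tendsto (dickWeightSum 2) atTop (𝓝 (5 / 2)) := by
  have h := tendsto_const_nhds (x := (5 / 2 : ℝ)).sub
    ((tendsto_inv_two_pow.const_mul (3 / 2)).add (tendsto_natCast_mul_inv_two_pow.div_const 2))
  simp only [mul_zero, zero_div, add_zero, sub_zero] at h
  exact h.congr fun m => by rw [dickWeightSum_two]; ring

theorem tendsto_dickWeightSum_three : Tendsto (dickWeightSum 3) atTop (𝓝 (43 / 18)) := by
  have h := (tendsto_const_nhds (x := (43 / 18 : ℝ)).sub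
    (tendsto_inv_two_pow.const_mul (5 / 2))).add
    (((tendsto_inv_two_pow.pow 2).const_mul (10 / 9)).add
      ((tendsto_natCast_mul_inv_two_pow.mul tendsto_inv_two_pow).div_const 3))
  simp only [mul_zero, zero_div, add_zero, sub_zero, ne_eq, OfNat.ofNat_ne_zero,
    not_false_eq_true, zero_pow] at h
  exact h.congr fun m => by rw [dickWeightSum_three]; ring

theorem tendsto_dickWeightSum_four : Tendsto (dickWeightSum 4) atTop (𝓝 (701 / 294)) := by
  have h := ((tendsto_const_nhds (x := (701 / 294 : ℝ)).sub
    (tendsto_inv_two_pow.const_mul (43 / 18))).add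
    ((tendsto_inv_two_pow.pow 2).const_mul (5 / 3))).sub
    (((tendsto_inv_two_pow.pow 3).const_mul (292 / 441)).add
      ((tendsto_natCast_mul_inv_two_pow.mul (tendsto_inv_two_pow.pow 2)).const_mul (4 / 21)))
  simp only [mul_zero, add_zero, sub_zero, ne_eq, OfNat.ofNat_ne_zero,
    not_false_eq_true, zero_pow] at h
  exact h.congr fun m => by rw [dickWeightSum_four]; ring

theorem summable_dickWeight_mul_walsh {α : ℕ} {W : ℝ}
    (hW : Tendsto (dickWeightSum α) atTop (𝓝 W)) (x : ℝ) :
    Summable fun k => (2 : ℝ) ^ (-(dickWeight α k : ℤ)) * walsh k x := by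
  have hmono : Monotone (dickWeightSum α) := monotone_nat_of_le_succ fun m =>
    sum_le_sum_of_subset_of_nonneg (range_subset_range.2 (Nat.pow_le_pow_right two_pos m.le_succ))
      fun _ _ _ => by positivity
  refine summable_abs_iff.1 (summable_of_sum_range_le (c := W) (fun _ => abs_nonneg _) fun n => ?_)
  calc ∑ k ∈ range n, |(2 : ℝ) ^ (-(dickWeight α k : ℤ)) * walsh k x|
      = ∑ k ∈ range n, (2 : ℝ) ^ (-(dickWeight α k : ℤ)) := by simp [abs_mul, abs_walsh]
    _ ≤ dickWeightSum α n := sum_le_sum_of_subset_of_nonneg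
        (range_subset_range.2 n.lt_two_pow_self.le) fun _ _ _ => by positivity
    _ ≤ W := hmono.ge_of_tendsto hW n

theorem omegaDick_eq_of_tendsto {α : ℕ} {x W A : ℝ}
    (hW : Tendsto (dickWeightSum α) atTop (𝓝 W))
    (h : Tendsto (dickBlockSum α x) atTop (𝓝 A)) : omegaDick α x = A - 1 := by
  have hs := summable_dickWeight_mul_walsh hW x
  have hA : ∑' k, (2 : ℝ) ^ (-(dickWeight α k : ℤ)) * walsh k x = A :=
    tendsto_nhds_unique ((hs.hasSum.tendsto_sum_nat).comp
      (tendsto_pow_atTop_atTop_of_one_lt one_lt_two)) h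
  rw [hs.tsum_eq_zero_add] at hA
  simp only [dickWeight_zero_right, walsh_zero_left, CharP.cast_eq_zero, neg_zero, zpow_zero,
    mul_one] at hA
  rw [omegaDick]
  linarith

theorem omegaDick_at_zero {α : ℕ} {W : ℝ} (hW : Tendsto (dickWeightSum α) atTop (𝓝 W)) :
    omegaDick α 0 = W - 1 :=
  omegaDick_eq_of_tendsto hW (by rwa [dickBlockSum_at_zero])

noncomputable def dyadicTrunc (x : ℝ) (m : ℕ) : ℝ := ⌊(2 : ℝ) ^ m * x⌋ * (2⁻¹ : ℝ) ^ m

noncomputable def sserPartialSum (x : ℝ) (m : ℕ) : ℝ :=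
  ∑ a ∈ range m, walsh (2 ^ a) x * (2 : ℝ) ^ (-(3 * (a : ℤ)))

theorem two_zpow_neg_three_mul (a : ℕ) : (2 : ℝ) ^ (-(3 * (a : ℤ))) = ((2⁻¹ : ℝ) ^ a) ^ 3 := by
  rw [← pow_mul, mul_comm, ← two_zpow_neg_natCast]
  push_cast
  ring_nf

theorem dyadicTrunc_succ {x : ℝ} (hx : 0 ≤ x) (m : ℕ) :
    dyadicTrunc x (m + 1) = dyadicTrunc x m + binDigit (m + 1) x * (2⁻¹ : ℝ) ^ (m + 1) := by
  rw [dyadicTrunc, dyadicTrunc, floor_two_pow_succ_mul hx]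
  push_cast
  ring

theorem sserPartialSum_succ (x : ℝ) (m : ℕ) :
    sserPartialSum x (m + 1) = sserPartialSum x m + walsh (2 ^ m) x * ((2⁻¹ : ℝ) ^ m) ^ 3 := by
  rw [sserPartialSum, sum_range_succ, two_zpow_neg_three_mul, sserPartialSum]

theorem sserPartialSum_of_floor_eq_zero {x : ℝ} (hx : 0 ≤ x) {m : ℕ}
    (h : ⌊(2 : ℝ) ^ m * x⌋ = 0) : sserPartialSum x m = 8 / 7 * (1 - ((2⁻¹ : ℝ) ^ m) ^ 3) := by
  induction m with
  | zero => simp [sserPartialSum]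
  | succ m ih =>
    have hm : ⌊(2 : ℝ) ^ m * x⌋ = 0 :=
      le_antisymm (h ▸ floor_two_pow_mul_mono hx m.le_succ) (floor_two_pow_mul_nonneg hx m)
    rw [sserPartialSum_succ, ih hm,
      walsh_eq_one_of_floor_eq_zero hx (Nat.pow_lt_pow_right one_lt_two m.lt_succ_self) h]
    ring

theorem tendsto_dyadicTrunc (x : ℝ) : Tendsto (dyadicTrunc x) atTop (𝓝 x) := by
  have hx : ∀ m : ℕ, x = (2 : ℝ) ^ m * x * (2⁻¹ : ℝ) ^ m := fun m => by
    rw [mul_right_comm, ← mul_pow]; norm_num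
  have hle : ∀ m, dyadicTrunc x m ≤ x := fun m => by
    conv_rhs => rw [hx m]
    exact mul_le_mul_of_nonneg_right (Int.floor_le _) (by positivity)
  have hge : ∀ m, x - (2⁻¹ : ℝ) ^ m ≤ dyadicTrunc x m := fun m => by
    calc x - (2⁻¹ : ℝ) ^ m = ((2 : ℝ) ^ m * x - 1) * (2⁻¹ : ℝ) ^ m := by
          conv_lhs => rw [hx m]
          ring
      _ ≤ dyadicTrunc x m :=
          mul_le_mul_of_nonneg_right (by linarith [Int.lt_floor_add_one ((2 : ℝ) ^ m * x)])
            (by positivity)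
  have hlim : Tendsto (fun m : ℕ => x - (2⁻¹ : ℝ) ^ m) atTop (𝓝 x) := by
    simpa using tendsto_const_nhds.sub tendsto_inv_two_pow
  exact tendsto_of_tendsto_of_tendsto_of_le_of_le hlim tendsto_const_nhds hge hle

theorem tendsto_sserPartialSum (x : ℝ) : Tendsto (sserPartialSum x) atTop (𝓝 (Sser x)) := by
  refine (Summable.hasSum ?_).tendsto_sum_nat
  refine Summable.of_norm_bounded (g := fun a : ℕ => ((2⁻¹ : ℝ) ^ 3) ^ a)
    (summable_geometric_of_lt_one (by norm_num) (by norm_num)) fun a => ?_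
  rw [Real.norm_eq_abs, abs_mul, abs_walsh, two_zpow_neg_three_mul, one_mul, ← pow_mul, ← pow_mul,
    mul_comm, abs_of_pos (by positivity)]

theorem omegaDick_eq_of_eventually_eq {α : ℕ} {x W : ℝ}
    (hW : Tendsto (dickWeightSum α) atTop (𝓝 W)) {F : ℝ × ℝ × ℝ → ℝ} (hF : Continuous F)
    {m₀ : ℕ} (h : ∀ m, m₀ ≤ m →
      dickBlockSum α x m = F (dyadicTrunc x m, (2⁻¹ : ℝ) ^ m, sserPartialSum x m)) :
    omegaDick α x = F (x, 0, Sser x) - 1 := by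
  refine omegaDick_eq_of_tendsto hW
    (Tendsto.congr' (eventually_atTop.2 ⟨m₀, fun m hm => (h m hm).symm⟩) ?_)
  exact (hF.tendsto _).comp ((tendsto_dyadicTrunc x).prodMk_nhds
    (tendsto_inv_two_pow.prodMk_nhds (tendsto_sserPartialSum x)))

section FirstDigit

/- The hypothesis `⌊2 ^ (c + 1) * x⌋ = 1` used throughout says that `x_{c+1}` is the first nonzero
binary digit of `x`, i.e. `β(x) = c + 1`. -/

variable {x : ℝ} {c : ℕ}

theorem nonneg_of_floor_two_pow_mul_eq_one (hc : ⌊(2 : ℝ) ^ (c + 1) * x⌋ = 1) : 0 ≤ x := by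
  have h := Int.floor_le ((2 : ℝ) ^ (c + 1) * x)
  rw [hc, Int.cast_one] at h
  exact nonneg_of_mul_nonneg_right (one_pos.le.trans h) (by positivity)

theorem floor_eq_zero_and_binDigit_eq_one (hc : ⌊(2 : ℝ) ^ (c + 1) * x⌋ = 1) :
    ⌊(2 : ℝ) ^ c * x⌋ = 0 ∧ binDigit (c + 1) x = 1 := by
  have hx := nonneg_of_floor_two_pow_mul_eq_one hc
  have h := floor_two_pow_succ_mul hx c
  have := floor_two_pow_mul_nonneg hx c
  have := binDigit_eq_zero_or_one (c + 1) x
  omega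

theorem dickBlockSum_succ_first (hc : ⌊(2 : ℝ) ^ (c + 1) * x⌋ = 1) (α : ℕ) :
    dickBlockSum (α + 1) x (c + 1) =
      dickWeightSum (α + 1) c - (2⁻¹ : ℝ) ^ (c + 1) * dickWeightSum α c := by
  have hx := nonneg_of_floor_two_pow_mul_eq_one hc
  obtain ⟨hfloor, hdigit⟩ := floor_eq_zero_and_binDigit_eq_one hc
  rw [dickBlockSum_succ_succ, dickBlockSum_eq_dickWeightSum _ hx hfloor,
    dickBlockSum_eq_dickWeightSum _ hx hfloor, walsh_two_pow_eq, hdigit]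
  ring

theorem dickBlockSum_zero_of_le (hc : ⌊(2 : ℝ) ^ (c + 1) * x⌋ = 1) {m : ℕ} (hm : c + 1 ≤ m) :
    dickBlockSum 0 x m = 0 := by
  induction m, hm using Nat.le_induction with
  | base =>
    rw [dickBlockSum_zero_succ, walsh_two_pow_eq, (floor_eq_zero_and_binDigit_eq_one hc).2]
    ring
  | succ m _ ih => rw [dickBlockSum_zero_succ, ih, mul_zero]

theorem dyadicTrunc_first (hc : ⌊(2 : ℝ) ^ (c + 1) * x⌋ = 1) :
    dyadicTrunc x (c + 1) = (2⁻¹ : ℝ) ^ (c + 1) := by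
  rw [dyadicTrunc, hc, Int.cast_one, one_mul]

theorem sserPartialSum_first (hc : ⌊(2 : ℝ) ^ (c + 1) * x⌋ = 1) :
    sserPartialSum x (c + 1) = 8 / 7 - 15 / 7 * ((2⁻¹ : ℝ) ^ c) ^ 3 := by
  have hx := nonneg_of_floor_two_pow_mul_eq_one hc
  obtain ⟨hfloor, hdigit⟩ := floor_eq_zero_and_binDigit_eq_one hc
  rw [sserPartialSum_succ, sserPartialSum_of_floor_eq_zero hx hfloor, walsh_two_pow_eq, hdigit]
  ring

theorem dickBlockSum_one_of_le (hc : ⌊(2 : ℝ) ^ (c + 1) * x⌋ = 1) {m : ℕ} (hm : c + 1 ≤ m) :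
    dickBlockSum 1 x m = (c + 1) / 2 := by
  induction m, hm using Nat.le_induction with
  | base =>
    have h : (2⁻¹ : ℝ) ^ c * 2 ^ c = 1 := by rw [← mul_pow]; norm_num
    rw [dickBlockSum_succ_first hc, dickWeightSum_one, dickWeightSum_zero_left]
    linear_combination -h / 2
  | succ m hm ih =>
    rw [dickBlockSum_succ_succ, ih, dickBlockSum_zero_of_le hc hm, mul_zero, add_zero]

theorem dickBlockSum_two_of_le (hc : ⌊(2 : ℝ) ^ (c + 1) * x⌋ = 1) {m : ℕ} (hm : c + 1 ≤ m) :
    dickBlockSum 2 x m = 5 / 2 * (1 - (2⁻¹ : ℝ) ^ (c + 1))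
      - (c + 1) * (dyadicTrunc x m + (2⁻¹ : ℝ) ^ m / 2) := by
  have hx := nonneg_of_floor_two_pow_mul_eq_one hc
  induction m, hm using Nat.le_induction with
  | base =>
    rw [dickBlockSum_succ_first hc, dickWeightSum_two, dickWeightSum_one, dyadicTrunc_first hc]
    ring
  | succ m hm ih =>
    rw [dickBlockSum_succ_succ, ih, dickBlockSum_one_of_le hc hm, walsh_two_pow_eq,
      dyadicTrunc_succ hx]
    ring

theorem dickBlockSum_three_of_le (hc : ⌊(2 : ℝ) ^ (c + 1) * x⌋ = 1) {m : ℕ} (hm : c + 1 ≤ m) :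
    dickBlockSum 3 x m =
      (c + 1) * (dyadicTrunc x m ^ 2 + dyadicTrunc x m * (2⁻¹ : ℝ) ^ m + ((2⁻¹ : ℝ) ^ m) ^ 2 / 3)
      - 5 * (1 - (2⁻¹ : ℝ) ^ (c + 1)) * (dyadicTrunc x m + (2⁻¹ : ℝ) ^ m / 2)
      + 43 / 18 * (1 - ((2⁻¹ : ℝ) ^ (c + 1)) ^ 2) := by
  have hx := nonneg_of_floor_two_pow_mul_eq_one hc
  induction m, hm using Nat.le_induction with
  | base =>
    rw [dickBlockSum_succ_first hc, dickWeightSum_three, dickWeightSum_two, dyadicTrunc_first hc]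
    ring
  | succ m hm ih =>
    rw [dickBlockSum_succ_succ, ih, dickBlockSum_two_of_le hc hm, walsh_two_pow_eq,
      dyadicTrunc_succ hx]
    rcases binDigit_eq_zero_or_one (m + 1) x with h | h <;> rw [h] <;> push_cast <;> ring

theorem dickBlockSum_four_of_le (hc : ⌊(2 : ℝ) ^ (c + 1) * x⌋ = 1) {m : ℕ} (hm : c + 1 ≤ m) :
    dickBlockSum 4 x m = -(2 / 3) * (c + 1) * (dyadicTrunc x m ^ 3
        + 3 / 2 * dyadicTrunc x m ^ 2 * (2⁻¹ : ℝ) ^ m + dyadicTrunc x m * ((2⁻¹ : ℝ) ^ m) ^ 2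
        + ((2⁻¹ : ℝ) ^ m) ^ 3 / 4)
      + 5 * (1 - (2⁻¹ : ℝ) ^ (c + 1)) *
        (dyadicTrunc x m ^ 2 + dyadicTrunc x m * (2⁻¹ : ℝ) ^ m + ((2⁻¹ : ℝ) ^ m) ^ 2 / 3)
      - 43 / 9 * (1 - ((2⁻¹ : ℝ) ^ (c + 1)) ^ 2) * (dyadicTrunc x m + (2⁻¹ : ℝ) ^ m / 2)
      + 701 / 294 * (1 - ((2⁻¹ : ℝ) ^ (c + 1)) ^ 3)
      + (c + 1) * (sserPartialSum x m / 48 - 1 / 42) := by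
  have hx := nonneg_of_floor_two_pow_mul_eq_one hc
  induction m, hm using Nat.le_induction with
  | base =>
    rw [dickBlockSum_succ_first hc, dickWeightSum_four, dickWeightSum_three, dyadicTrunc_first hc,
      sserPartialSum_first hc]
    ring
  | succ m hm ih =>
    rw [dickBlockSum_succ_succ, ih, dickBlockSum_three_of_le hc hm, walsh_two_pow_eq,
      dyadicTrunc_succ hx, sserPartialSum_succ, walsh_two_pow_eq]
    rcases binDigit_eq_zero_or_one (m + 1) x with h | h <;> rw [h] <;> push_cast <;> ring

theorem omegaDick_two_of_floor_eq_one (hc : ⌊(2 : ℝ) ^ (c + 1) * x⌋ = 1) :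
    omegaDick 2 x = -1 - (c + 1) * x + 5 / 2 * (1 - (2⁻¹ : ℝ) ^ (c + 1)) := by
  rw [omegaDick_eq_of_eventually_eq tendsto_dickWeightSum_two
    (F := fun p => 5 / 2 * (1 - (2⁻¹ : ℝ) ^ (c + 1)) - (c + 1) * (p.1 + p.2.1 / 2))
    (by fun_prop) fun m => dickBlockSum_two_of_le hc]
  ring

theorem omegaDick_three_of_floor_eq_one (hc : ⌊(2 : ℝ) ^ (c + 1) * x⌋ = 1) :
    omegaDick 3 x = -1 + (c + 1) * x ^ 2 - 5 * (1 - (2⁻¹ : ℝ) ^ (c + 1)) * x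
      + 43 / 18 * (1 - ((2⁻¹ : ℝ) ^ (c + 1)) ^ 2) := by
  rw [omegaDick_eq_of_eventually_eq tendsto_dickWeightSum_three
    (F := fun p => (c + 1) * (p.1 ^ 2 + p.1 * p.2.1 + p.2.1 ^ 2 / 3)
      - 5 * (1 - (2⁻¹ : ℝ) ^ (c + 1)) * (p.1 + p.2.1 / 2)
      + 43 / 18 * (1 - ((2⁻¹ : ℝ) ^ (c + 1)) ^ 2))
    (by fun_prop) fun m => dickBlockSum_three_of_le hc]
  ring

theorem omegaDick_four_of_floor_eq_one (hc : ⌊(2 : ℝ) ^ (c + 1) * x⌋ = 1) :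
    omegaDick 4 x = -1 - 2 / 3 * (c + 1) * x ^ 3 + 5 * (1 - (2⁻¹ : ℝ) ^ (c + 1)) * x ^ 2
      - 43 / 9 * (1 - ((2⁻¹ : ℝ) ^ (c + 1)) ^ 2) * x
      + 701 / 294 * (1 - ((2⁻¹ : ℝ) ^ (c + 1)) ^ 3) + (c + 1) * (Sser x / 48 - 1 / 42) := by
  rw [omegaDick_eq_of_eventually_eq tendsto_dickWeightSum_four
    (F := fun p => -(2 / 3) * (c + 1) * (p.1 ^ 3 + 3 / 2 * p.1 ^ 2 * p.2.1 + p.1 * p.2.1 ^ 2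
        + p.2.1 ^ 3 / 4)
      + 5 * (1 - (2⁻¹ : ℝ) ^ (c + 1)) * (p.1 ^ 2 + p.1 * p.2.1 + p.2.1 ^ 2 / 3)
      - 43 / 9 * (1 - ((2⁻¹ : ℝ) ^ (c + 1)) ^ 2) * (p.1 + p.2.1 / 2)
      + 701 / 294 * (1 - ((2⁻¹ : ℝ) ^ (c + 1)) ^ 3)
      + (c + 1) * (p.2.2 / 48 - 1 / 42))
    (by fun_prop) fun m => dickBlockSum_four_of_le hc]
  ring

end FirstDigit

theorem exists_betaFn_eq_and_floor_eq_one {x : ℝ} (hx0 : 0 < x) (hx1 : x < 1) :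
    ∃ c : ℕ, betaFn x = c + 1 ∧ ⌊(2 : ℝ) ^ (c + 1) * x⌋ = 1 := by
  set n := Int.log 2 x
  have hlog : ⌊Real.logb 2 x⌋ = n := by exact_mod_cast Real.floor_logb_natCast (b := 2) hx0.le
  have hlo : (2 : ℝ) ^ n ≤ x := by exact_mod_cast Int.zpow_log_le_self one_lt_two hx0
  have hhi : x < (2 : ℝ) ^ (n + 1) := by exact_mod_cast Int.lt_zpow_succ_log_self one_lt_two x
  have hn : n < 0 := by
    by_contra! h
    linarith [one_le_zpow₀ (one_le_two (α := ℝ)) h]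
  obtain ⟨c, hc⟩ : ∃ c : ℕ, n = -(c + 1 : ℤ) := ⟨(-n - 1).toNat, by omega⟩
  refine ⟨c, by simp [betaFn, hx0.ne', hlog, hc], ?_⟩
  have hpow : (2 : ℝ) ^ (c + 1) * (2 : ℝ) ^ n = 1 := by
    rw [hc, zpow_neg, ← Nat.cast_one (R := ℤ), ← Nat.cast_add, zpow_natCast,
      mul_inv_cancel₀ (by positivity)]
  rw [zpow_add_one₀ two_ne_zero] at hhi
  have hP : (0 : ℝ) < 2 ^ (c + 1) := by positivity
  rw [Int.floor_eq_iff, Int.cast_one]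
  constructor <;> nlinarith

theorem tFn_eq_of_betaFn_eq {x : ℝ} {c : ℕ} (hx : x ≠ 0) (hβ : betaFn x = c + 1) (ν : ℕ) :
    tFn ν x = ((2⁻¹ : ℝ) ^ (c + 1)) ^ ν := by
  rw [tFn, if_neg hx, hβ, ← pow_mul, ← two_zpow_neg_natCast]
  push_cast
  ring_nf

theorem stmt_11 (x : ℝ) (hx : x ∈ Set.Ico (0 : ℝ) 1) :
    (omegaDick 2 x = -1 - (betaFn x : ℝ) * x + 5 / 2 * (1 - tFn 1 x)) ∧
    (omegaDick 3 x =
      -1 + (betaFn x : ℝ) * x ^ 2 - 5 * (1 - tFn 1 x) * x + 43 / 18 * (1 - tFn 2 x)) ∧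
    (omegaDick 4 x =
      -1 - 2 / 3 * (betaFn x : ℝ) * x ^ 3 + 5 * (1 - tFn 1 x) * x ^ 2 -
        43 / 9 * (1 - tFn 2 x) * x + 701 / 294 * (1 - tFn 3 x) +
        (betaFn x : ℝ) * (Sser x / 48 - 1 / 42)) := by
  obtain ⟨hx0, hx1⟩ := hx
  rcases hx0.eq_or_lt with rfl | hpos
  · simp only [omegaDick_at_zero tendsto_dickWeightSum_two,
      omegaDick_at_zero tendsto_dickWeightSum_three, omegaDick_at_zero tendsto_dickWeightSum_four,
      betaFn, tFn, if_true]
    norm_num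
  · obtain ⟨c, hβ, hc⟩ := exists_betaFn_eq_and_floor_eq_one hpos hx1
    simp only [tFn_eq_of_betaFn_eq hpos.ne' hβ, hβ, pow_one]
    push_cast
    exact ⟨omegaDick_two_of_floor_eq_one hc, omegaDick_three_of_floor_eq_one hc,
      omegaDick_four_of_floor_eq_one hc⟩
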